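/- If (A*,B*) is a minimum s-t cut of the network G(R), then, letting S ⊆ A be the set of alternatives whose nodes lie in A*, the dichotomous weak order O_S has minimum total disagreement with the profile R among all dichotomous weak orders; that is, for every subset S' ⊆ A, the total disagreement of O_S with R is at most the total disagreement of O_{S'} with R. -/
import Mathlib


/-- Number of voters strictly preferring `a` to `b`. -/
def Nvot {α : Type} [Fintype α] [DecidableEq α] {n : ℕ}
    (R : Fin n → α → α → Bool) (a b : α) : ℕ :=
  (Finset.univ.filter (fun i : Fin n => R i a b ∧ ¬ R i b a)).card

/-- Number of voters indifferent between `a` and `b`. -/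
def Evot {α : Type} [Fintype α] [DecidableEq α] {n : ℕ}
    (R : Fin n → α → α → Bool) (a b : α) : ℕ :=
  (Finset.univ.filter (fun i : Fin n => R i a b ∧ R i b a)).card

/-- The dichotomous weak order with top class `S` contains `(a,b)` iff `a ∈ S ∨ b ∉ S`. -/
def OS {α : Type} [DecidableEq α] (S : Finset α) (a b : α) : Bool :=
  decide (a ∈ S ∨ b ∉ S)

/-- Total number of disagreements between the profile `R` and the dichotomous
weak order with top class `S`. -/
def totalDisagreement {α : Type} [Fintype α] [DecidableEq α] {n : ℕ}
    (R : Fin n → α → α → Bool) (S : Finset α) : ℕ :=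
  ∑ i : Fin n,
    ((Finset.univ : Finset (α × α)).filter
      (fun p => R i p.1 p.2 ≠ OS S p.1 p.2)).card

/-- Vertices of the network `G(R)`: a source, a sink, one node per alternative,
and one node per ordered pair of (distinct) alternatives. -/
inductive Vertex (α : Type) where
  | s : Vertex α
  | t : Vertex α
  | alt : α → Vertex α
  | pair : α → α → Vertex α

/-- `C` describes an s-t cut: `A* = {x | C x = true}`, `B* = {x | C x = false}`,
with `s ∈ A*` and `t ∈ B*`. -/
def IsCut {α : Type} (C : Vertex α → Bool) : Prop :=
  C .s = true ∧ C .t = false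

/-- A cut is consistent if each pair node `v_(a,b)` is on the same side as `a`. -/
def Consistent {α : Type} (C : Vertex α → Bool) : Prop :=
  ∀ a b : α, a ≠ b → C (.pair a b) = C (.alt a)

/-- The capacity of the cut described by `C`: the total weight of arcs going
from `A*` to `B*`, where for each ordered pair `(a,b)` of distinct alternatives
the arcs are `(s, v_(a,b))` of weight `N(a,b)`, `(v_(a,b), t)` of weight `N(b,a)`,
`(a, v_(a,b))` and `(v_(a,b), a)` of weight `L`, and `(a, b)` of weight `E(b,a)`. -/
def cutCapacity {α : Type} [Fintype α] [DecidableEq α] {n : ℕ}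
    (R : Fin n → α → α → Bool) (L : ℕ) (C : Vertex α → Bool) : ℕ :=
  ∑ p ∈ (Finset.univ : Finset (α × α)).filter (fun p => p.1 ≠ p.2),
    ((if C .s ∧ ¬ C (.pair p.1 p.2) then Nvot R p.1 p.2 else 0) +
     (if C (.pair p.1 p.2) ∧ ¬ C .t then Nvot R p.2 p.1 else 0) +
     (if C (.alt p.1) ∧ ¬ C (.pair p.1 p.2) then L else 0) +
     (if C (.pair p.1 p.2) ∧ ¬ C (.alt p.1) then L else 0) +
     (if C (.alt p.1) ∧ ¬ C (.alt p.2) then Evot R p.2 p.1 else 0))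

/-- The total weight of arcs of the pair gadget of `{a,b}` that go from `A*` to `B*`.
The gadget consists of the arcs `(s,v_(a,b))`, `(s,v_(b,a))`, `(v_(a,b),t)`,
`(v_(b,a),t)`, `(a,v_(a,b))`, `(v_(a,b),a)`, `(b,v_(b,a))`, `(v_(b,a),b)`,
`(a,b)` and `(b,a)`. -/
def gadgetCrossWeight {α : Type} [Fintype α] [DecidableEq α] {n : ℕ}
    (R : Fin n → α → α → Bool) (L : ℕ) (C : Vertex α → Bool) (a b : α) : ℕ :=
  (if C .s ∧ ¬ C (.pair a b) then Nvot R a b else 0) +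
  (if C .s ∧ ¬ C (.pair b a) then Nvot R b a else 0) +
  (if C (.pair a b) ∧ ¬ C .t then Nvot R b a else 0) +
  (if C (.pair b a) ∧ ¬ C .t then Nvot R a b else 0) +
  (if C (.alt a) ∧ ¬ C (.pair a b) then L else 0) +
  (if C (.pair a b) ∧ ¬ C (.alt a) then L else 0) +
  (if C (.alt b) ∧ ¬ C (.pair b a) then L else 0) +
  (if C (.pair b a) ∧ ¬ C (.alt b) then L else 0) +
  (if C (.alt a) ∧ ¬ C (.alt b) then Evot R b a else 0) +
  (if C (.alt b) ∧ ¬ C (.alt a) then Evot R a b else 0)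


section Stmt6Aux
variable {α : Type} [Fintype α] [DecidableEq α] {n : ℕ}

lemma point_aux (R : Fin n → α → α → Bool)
    (hcomp : ∀ (i : Fin n) (a b : α), R i a b = true ∨ R i b a = true)
    (S : Finset α) (a b : α) :
    ((Finset.univ.filter fun i : Fin n => R i a b ≠ OS S a b).card
      + (Finset.univ.filter fun i : Fin n => R i b a ≠ OS S b a).card)
    = (((if a ∈ S then Nvot R b a else Nvot R a b)
        + if a ∈ S ∧ b ∉ S then Evot R b a else 0)
      + ((if b ∈ S then Nvot R a b else Nvot R b a)
        + if b ∈ S ∧ a ∉ S then Evot R a b else 0)) := by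
  have e1 : (if a ∈ S then Nvot R b a else Nvot R a b)
      = ∑ i : Fin n, (if a ∈ S then (if R i b a ∧ ¬ R i a b then 1 else 0)
          else (if R i a b ∧ ¬ R i b a then 1 else 0)) := by
    by_cases h : a ∈ S
    · simp only [if_pos h]; unfold Nvot; rw [Finset.card_filter]
    · simp only [if_neg h]; unfold Nvot; rw [Finset.card_filter]
  have e2 : (if b ∈ S then Nvot R a b else Nvot R b a)
      = ∑ i : Fin n, (if b ∈ S then (if R i a b ∧ ¬ R i b a then 1 else 0)
          else (if R i b a ∧ ¬ R i a b then 1 else 0)) := by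
    by_cases h : b ∈ S
    · simp only [if_pos h]; unfold Nvot; rw [Finset.card_filter]
    · simp only [if_neg h]; unfold Nvot; rw [Finset.card_filter]
  have e3 : (if a ∈ S ∧ b ∉ S then Evot R b a else 0)
      = ∑ i : Fin n, (if a ∈ S ∧ b ∉ S then (if R i b a ∧ R i a b then 1 else 0) else 0) := by
    by_cases h : a ∈ S ∧ b ∉ S
    · simp only [if_pos h]; unfold Evot; rw [Finset.card_filter]
    · simp only [if_neg h]; rw [Finset.sum_const_zero]
  have e4 : (if b ∈ S ∧ a ∉ S then Evot R a b else 0)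
      = ∑ i : Fin n, (if b ∈ S ∧ a ∉ S then (if R i a b ∧ R i b a then 1 else 0) else 0) := by
    by_cases h : b ∈ S ∧ a ∉ S
    · simp only [if_pos h]; unfold Evot; rw [Finset.card_filter]
    · simp only [if_neg h]; rw [Finset.sum_const_zero]
  rw [e1, e2, e3, e4, Finset.card_filter, Finset.card_filter,
      ← Finset.sum_add_distrib, ← Finset.sum_add_distrib, ← Finset.sum_add_distrib,
      ← Finset.sum_add_distrib]
  refine Finset.sum_congr rfl fun i _ => ?_
  rcases hcomp i a b with h | h <;>
    cases h1 : R i a b <;> cases h2 : R i b a <;>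
    by_cases ha : a ∈ S <;> by_cases hb : b ∈ S <;>
    simp_all [OS]

lemma sum_swap_pairs (f : α × α → ℕ) :
    ∑ p ∈ Finset.univ.filter (fun p : α × α => p.1 ≠ p.2), f p
      = ∑ p ∈ Finset.univ.filter (fun p : α × α => p.1 ≠ p.2), f (p.2, p.1) := by
  refine Finset.sum_equiv (Equiv.prodComm α α) (fun p => ?_) (fun p hp => ?_)
  · simp [ne_comm]
  · rfl

lemma sum_pairs_eq (f g : α × α → ℕ)
    (hswap : ∀ p : α × α, p.1 ≠ p.2 → f p + f (p.2, p.1) = g p + g (p.2, p.1)) :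
    ∑ p ∈ Finset.univ.filter (fun p : α × α => p.1 ≠ p.2), f p
      = ∑ p ∈ Finset.univ.filter (fun p : α × α => p.1 ≠ p.2), g p := by
  have h2 : ∑ p ∈ Finset.univ.filter (fun p : α × α => p.1 ≠ p.2), (f p + f (p.2, p.1))
      = ∑ p ∈ Finset.univ.filter (fun p : α × α => p.1 ≠ p.2), (g p + g (p.2, p.1)) :=
    Finset.sum_congr rfl fun p hp => hswap p (by simpa using hp)
  rw [Finset.sum_add_distrib, Finset.sum_add_distrib,
      ← sum_swap_pairs f, ← sum_swap_pairs g] at h2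
  omega

lemma td_eq_sum_pairs (R : Fin n → α → α → Bool)
    (hrefl : ∀ (i : Fin n) (a : α), R i a a = true) (S : Finset α) :
    totalDisagreement R S
      = ∑ p ∈ Finset.univ.filter (fun p : α × α => p.1 ≠ p.2),
          (Finset.univ.filter fun i : Fin n => R i p.1 p.2 ≠ OS S p.1 p.2).card := by
  unfold totalDisagreement
  simp only [Finset.card_filter]
  rw [Finset.sum_comm]
  symm
  apply Finset.sum_subset (Finset.filter_subset _ _)
  intro p _ hp
  have hpp : p.1 = p.2 := by simpa using hp
  apply Finset.sum_eq_zero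
  intro i _
  rw [← hpp]
  have hOS : OS S p.1 p.1 = true := decide_eq_true or_not
  rw [if_neg]
  simp [hOS, hrefl]

lemma cap_eq_sum_pairs (R : Fin n → α → α → Bool) (L : ℕ) (C : Vertex α → Bool)
    (hcut : IsCut C) (hcons : Consistent C) (S : Finset α)
    (hSC : ∀ x : α, x ∈ S ↔ C (.alt x) = true) :
    cutCapacity R L C
      = ∑ p ∈ Finset.univ.filter (fun p : α × α => p.1 ≠ p.2),
          ((if p.1 ∈ S then Nvot R p.2 p.1 else Nvot R p.1 p.2)
            + if p.1 ∈ S ∧ p.2 ∉ S then Evot R p.2 p.1 else 0) := by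
  unfold cutCapacity
  refine Finset.sum_congr rfl fun p hp => ?_
  have hne : p.1 ≠ p.2 := by simpa using hp
  obtain ⟨h1, h2⟩ := hcut
  have hpc : C (.pair p.1 p.2) = C (.alt p.1) := hcons p.1 p.2 hne
  by_cases hca : C (.alt p.1) = true <;> by_cases hcb : C (.alt p.2) = true <;>
    simp_all [hSC]

lemma cap_consistent (R : Fin n → α → α → Bool)
    (hrefl : ∀ (i : Fin n) (a : α), R i a a = true)
    (hcomp : ∀ (i : Fin n) (a b : α), R i a b = true ∨ R i b a = true)
    (L : ℕ) (C : Vertex α → Bool) (hcut : IsCut C) (hcons : Consistent C) :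
    cutCapacity R L C
      = totalDisagreement R (Finset.univ.filter (fun a : α => C (.alt a) = true)) := by
  set S := Finset.univ.filter (fun a : α => C (.alt a) = true) with hS
  have hSC : ∀ x : α, x ∈ S ↔ C (.alt x) = true := by intro x; simp [hS]
  rw [td_eq_sum_pairs R hrefl S, cap_eq_sum_pairs R L C hcut hcons S hSC]
  exact sum_pairs_eq _ _ fun p hp => (point_aux R hcomp S p.1 p.2).symm

/-- The canonical consistent cut with top class `S`. -/
def canonC (S : Finset α) : Vertex α → Bool
  | .s => true
  | .t => false
  | .alt a => decide (a ∈ S)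
  | .pair a _ => decide (a ∈ S)

omit [Fintype α] in
lemma canonC_isCut (S : Finset α) : IsCut (canonC (α := α) S) := ⟨rfl, rfl⟩

lemma canonC_cap (R : Fin n → α → α → Bool)
    (hrefl : ∀ (i : Fin n) (a : α), R i a a = true)
    (hcomp : ∀ (i : Fin n) (a b : α), R i a b = true ∨ R i b a = true)
    (L : ℕ) (S : Finset α) :
    cutCapacity R L (canonC S) = totalDisagreement R S := by
  have h := cap_consistent R hrefl hcomp L (canonC S) (canonC_isCut S) (fun a b _ => rfl)
  have hset : (Finset.univ.filter (fun a : α => canonC S (.alt a) = true)) = S := by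
    ext a; simp [canonC]
  rwa [hset] at h

end Stmt6Aux

/-- If `(A*,B*)` is a minimum s-t cut of `G(R)` and `S` is the
set of alternatives whose nodes lie in `A*`, then `O_S` has minimum total
disagreement with `R` among all dichotomous weak orders. -/
theorem stmt6 {α : Type} [Fintype α] [DecidableEq α] {n : ℕ}
    (R : Fin n → α → α → Bool)
    (hrefl : ∀ (i : Fin n) (a : α), R i a a = true)
    (hcomp : ∀ (i : Fin n) (a b : α), R i a b = true ∨ R i b a = true)
    (L : ℕ) (hL : L > (Fintype.card α * n) ^ 5)
    (C : Vertex α → Bool) (hcut : IsCut C)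
    (hmin : ∀ C' : Vertex α → Bool, IsCut C' → cutCapacity R L C ≤ cutCapacity R L C') :
    ∀ S' : Finset α,
      totalDisagreement R (Finset.univ.filter (fun a : α => C (.alt a) = true)) ≤
        totalDisagreement R S' := by
  intro S'
  have hcons : Consistent C := by
    by_contra h
    unfold Consistent at h
    push_neg at h
    obtain ⟨a, b, hab, hne⟩ := h
    have hcap_le : cutCapacity R L C ≤ totalDisagreement R (∅ : Finset α) := by
      rw [← canonC_cap R hrefl hcomp L ∅]
      exact hmin _ (canonC_isCut ∅)
    have htd : totalDisagreement R (∅ : Finset α)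
        ≤ n * (Fintype.card α * Fintype.card α) := by
      unfold totalDisagreement
      calc ∑ i : Fin n, ((Finset.univ : Finset (α × α)).filter
              (fun p => R i p.1 p.2 ≠ OS (∅ : Finset α) p.1 p.2)).card
          ≤ ∑ _i : Fin n, (Finset.univ : Finset (α × α)).card :=
            Finset.sum_le_sum fun i _ => Finset.card_filter_le _ _
        _ = n * (Fintype.card α * Fintype.card α) := by
            simp [Finset.card_univ]
    have hLle : L ≤ cutCapacity R L C := by
      have hpmem : (a, b) ∈ Finset.univ.filter (fun p : α × α => p.1 ≠ p.2) := by
        simp [hab]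
      refine le_trans ?_ (Finset.single_le_sum (f := fun p : α × α =>
        ((if C .s ∧ ¬ C (.pair p.1 p.2) then Nvot R p.1 p.2 else 0) +
         (if C (.pair p.1 p.2) ∧ ¬ C .t then Nvot R p.2 p.1 else 0) +
         (if C (.alt p.1) ∧ ¬ C (.pair p.1 p.2) then L else 0) +
         (if C (.pair p.1 p.2) ∧ ¬ C (.alt p.1) then L else 0) +
         (if C (.alt p.1) ∧ ¬ C (.alt p.2) then Evot R p.2 p.1 else 0)))
        (fun p _ => Nat.zero_le _) hpmem)
      cases hca : C (Vertex.alt a) <;> cases hcp : C (Vertex.pair a b) <;>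
        simp_all <;> omega
    have hb2 : n * (Fintype.card α * Fintype.card α) ≤ (Fintype.card α * n) ^ 5 := by
      set m := Fintype.card α
      rcases Nat.eq_zero_or_pos m with hm | hm
      · simp [hm]
      rcases Nat.eq_zero_or_pos n with hn | hn
      · simp [hn]
      have h1 : n * (m * m) ≤ (m * n) ^ 2 := by ring_nf; nlinarith
      have h2 : (m * n) ^ 2 ≤ (m * n) ^ 5 :=
        Nat.pow_le_pow_right (Nat.one_le_iff_ne_zero.mpr (by positivity)) (by norm_num)
      exact le_trans h1 h2
    omega
  calc totalDisagreement R (Finset.univ.filter (fun a : α => C (.alt a) = true))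
      = cutCapacity R L C := (cap_consistent R hrefl hcomp L C hcut hcons).symm
    _ ≤ cutCapacity R L (canonC S') := hmin _ (canonC_isCut S')
    _ = totalDisagreement R S' := canonC_cap R hrefl hcomp L S'
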